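/- Fix integers 1 ≤ t1 ≤ T, a price cap p̄ > 0, a base demand function H bounded on [0,p̄], and arbitrary parameters η⁺, η⁻ ≥ 0. When the starting reference price equals the price cap p̄, the optimal ARM revenue is unchanged if the loss parameter is replaced by the gain parameter: V*_{(η⁺,η⁻)}(p̄, t1) = V*_{(η⁺,η⁺)}(p̄, t1), where V*_{(α,β)}(r, t1) denotes the supremum over price sequences in [0,p̄]^{T−t1+1} of Σ_{t=t1}^{T} p_t·(H(p_t) + α·max(r_t − p_t, 0) − β·max(p_t − r_t, 0)) with ARM reference prices r_t starting from r at time t1. -/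

import Mathlib

/-!
Listing the prices of any sequence in nonincreasing order keeps them in `[0, p̄]` and leaves
`Σ p H(p)` unchanged. It never lowers the total gain: swapping an adjacent increasing pair leaves the
later references unchanged and can only raise the gain of that pair. And when the reference starts
at the cap `p̄` it incurs no loss, since the reference of a nonincreasing sequence stays above the
current price. So the sorted sequences dominate every sequence for every loss parameter, and on
them the loss parameter is invisible; the two suprema therefore bound each other.
-/

/-- ARM reference price at time `t`, starting from reference price `r` at time `t1`:
`r_t = (t1·r + Σ_{s=t1}^{t−1} p_s)/t`. -/
noncomputable def armRef (t1 : ℕ) (r : ℝ) (p : ℕ → ℝ) (t : ℕ) : ℝ :=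
  ((t1 : ℝ) * r + ∑ s ∈ Finset.Ico t1 t, p s) / (t : ℝ)

/-- Single-round expected revenue with gain parameter `α` and loss parameter `β`. -/
noncomputable def armRev (H : ℝ → ℝ) (α β : ℝ) (x r : ℝ) : ℝ :=
  x * (H x + α * max (r - x) 0 - β * max (x - r) 0)

/-- Total ARM revenue of price sequence `p` over rounds `t1..T`. -/
noncomputable def armV (H : ℝ → ℝ) (α β : ℝ) (t1 T : ℕ) (r : ℝ) (p : ℕ → ℝ) : ℝ :=
  ∑ t ∈ Finset.Icc t1 T, armRev H α β (p t) (armRef t1 r p t)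

/-- Optimal ARM revenue `V*_{(α,β)}(r, t1)`. -/
noncomputable def armVStar (H : ℝ → ℝ) (α β : ℝ) (t1 T : ℕ) (pbar r : ℝ) : ℝ :=
  sSup {x : ℝ | ∃ p : ℕ → ℝ,
    (∀ t ∈ Finset.Icc t1 T, p t ∈ Set.Icc 0 pbar) ∧ x = armV H α β t1 T r p}

open Finset

noncomputable def gainTerm (x r : ℝ) : ℝ := x * max (r - x) 0

noncomputable def lossTerm (x r : ℝ) : ℝ := x * max (x - r) 0

noncomputable def armListSum (f : ℝ → ℝ → ℝ) : ℝ → ℝ → List ℝ → ℝ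
  | _, _, [] => 0
  | t, r, x :: l => f x r + armListSum f (t + 1) ((t * r + x) / (t + 1)) l

lemma armListSum_armRev (H : ℝ → ℝ) (α β : ℝ) (l : List ℝ) (t r : ℝ) :
    armListSum (armRev H α β) t r l = (l.map fun x => x * H x).sum
      + α * armListSum gainTerm t r l - β * armListSum lossTerm t r l := by
  induction l generalizing t r with
  | nil => simp [armListSum]
  | cons x l ih =>
    simp only [armListSum, armRev, gainTerm, lossTerm, List.map_cons, List.sum_cons, ih]
    ring

section ListSums

variable {t r a b : ℝ} {l : List ℝ}

lemma gainTerm_swap_le (ht : 0 ≤ t) (ha : 0 ≤ a) (hab : a ≤ b) :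
    gainTerm a r + gainTerm b ((t * r + a) / (t + 1)) ≤
      gainTerm b r + gainTerm a ((t * r + b) / (t + 1)) := by
  have ht1 : 0 < t + 1 := by linarith
  set r₁ := (t * r + a) / (t + 1)
  set r₂ := (t * r + b) / (t + 1)
  have e₁ : r₁ * (t + 1) = t * r + a := div_mul_cancel₀ _ ht1.ne'
  have e₂ : r₂ * (t + 1) = t * r + b := div_mul_cancel₀ _ ht1.ne'
  unfold gainTerm
  rcases le_or_gt r₁ b with hb | hb
  · -- `b` earns nothing after `a`; what `a` loses by coming second is `a (r - r₂)⁺`, and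
    -- `r - r₂ = (r - b) / (t + 1)`.
    have hsplit : max (r - a) 0 ≤ max (r₂ - a) 0 + max (r - r₂) 0 := by
      refine max_le ?_ (add_nonneg (le_max_right _ _) (le_max_right _ _))
      linarith [le_max_left (r₂ - a) 0, le_max_left (r - r₂) 0]
    have hdrift : max (r - r₂) 0 ≤ max (r - b) 0 := by
      refine max_le ?_ (le_max_right _ _)
      nlinarith [le_max_left (r - b) 0, mul_nonneg ht (le_max_right (r - b) 0)]
    rw [max_eq_right (by linarith : r₁ - b ≤ 0), mul_zero, add_zero]
    nlinarith [mul_le_mul_of_nonneg_left hsplit ha, mul_le_mul_of_nonneg_left hdrift ha,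
      mul_le_mul_of_nonneg_right hab (le_max_right (r - b) 0)]
  · -- All four gains are active, and the swap gains exactly `r (b - a) / (t + 1)`.
    have hra : a < r := by nlinarith
    have hrb : b < r := by nlinarith
    have hr₂a : a ≤ r₂ := by nlinarith
    rw [max_eq_left (by linarith : 0 ≤ r - a), max_eq_left (by linarith : 0 ≤ r₁ - b),
      max_eq_left (by linarith : 0 ≤ r - b), max_eq_left (by linarith : 0 ≤ r₂ - a)]
    nlinarith

lemma armListSum_gainTerm_swap_le (ht : 0 ≤ t) (ha : 0 ≤ a) (hab : a ≤ b) :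
    armListSum gainTerm t r (a :: b :: l) ≤ armListSum gainTerm t r (b :: a :: l) := by
  have ht1 : t + 1 ≠ 0 := by linarith
  have hsame : ((t + 1) * ((t * r + a) / (t + 1)) + b) / (t + 1 + 1)
      = ((t + 1) * ((t * r + b) / (t + 1)) + a) / (t + 1 + 1) := by
    rw [mul_div_cancel₀ _ ht1, mul_div_cancel₀ _ ht1]
    ring
  simp only [armListSum]
  rw [hsame]
  linarith [gainTerm_swap_le (r := r) ht ha hab]

lemma armListSum_gainTerm_le_orderedInsert (ht : 0 ≤ t) (ha : 0 ≤ a) (hl : ∀ x ∈ l, 0 ≤ x) :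
    armListSum gainTerm t r (a :: l) ≤ armListSum gainTerm t r (l.orderedInsert (· ≥ ·) a) := by
  induction l generalizing t r with
  | nil => rfl
  | cons b l ih =>
    rcases le_or_gt b a with hba | hab
    · simp [List.orderedInsert, hba]
    · have htail := ih (t := t + 1) (r := (t * r + b) / (t + 1)) (by linarith)
        (fun x hx => hl x (List.mem_cons_of_mem b hx))
      rw [List.orderedInsert_cons, if_neg hab.not_ge]
      refine (armListSum_gainTerm_swap_le ht ha hab.le).trans ?_
      simp only [armListSum] at htail ⊢
      linarith

lemma armListSum_gainTerm_le_insertionSort (ht : 0 ≤ t) (hl : ∀ x ∈ l, 0 ≤ x) :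
    armListSum gainTerm t r l ≤ armListSum gainTerm t r (l.insertionSort (· ≥ ·)) := by
  induction l generalizing t r with
  | nil => rfl
  | cons a l ih =>
    have ha : 0 ≤ a := hl a List.mem_cons_self
    have hl' : ∀ x ∈ l, 0 ≤ x := fun x hx => hl x (List.mem_cons_of_mem a hx)
    have htail := ih (t := t + 1) (r := (t * r + a) / (t + 1)) (by linarith) hl'
    calc armListSum gainTerm t r (a :: l)
        ≤ armListSum gainTerm t r (a :: l.insertionSort (· ≥ ·)) := by
          simp only [armListSum]; linarith
      _ ≤ armListSum gainTerm t r ((a :: l).insertionSort (· ≥ ·)) :=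
          armListSum_gainTerm_le_orderedInsert ht ha
            fun x hx => hl' x ((l.perm_insertionSort _).mem_iff.mp hx)

lemma armListSum_lossTerm_nonneg (hl : ∀ x ∈ l, 0 ≤ x) : 0 ≤ armListSum lossTerm t r l := by
  induction l generalizing t r with
  | nil => exact le_rfl
  | cons a l ih =>
    exact add_nonneg (mul_nonneg (hl a List.mem_cons_self) (le_max_right _ _))
      (ih fun x hx => hl x (List.mem_cons_of_mem a hx))

lemma armListSum_lossTerm_eq_zero (ht : 0 ≤ t) (hl : l.Pairwise (· ≥ ·)) (hr : ∀ x ∈ l, x ≤ r) :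
    armListSum lossTerm t r l = 0 := by
  induction l generalizing t r with
  | nil => rfl
  | cons a l ih =>
    obtain ⟨hhead, htail⟩ := List.pairwise_cons.mp hl
    have har : a ≤ r := hr a List.mem_cons_self
    have hnext : a ≤ (t * r + a) / (t + 1) := by
      rw [le_div_iff₀ (by linarith)]; nlinarith
    simp only [armListSum, lossTerm]
    rw [max_eq_right (by linarith), mul_zero, zero_add]
    exact ih (by linarith) htail fun x hx => (hhead x hx).trans hnext

end ListSums

lemma armRef_self {t1 : ℕ} (ht1 : 0 < t1) (r : ℝ) (p : ℕ → ℝ) : armRef t1 r p t1 = r := by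
  have : (t1 : ℝ) ≠ 0 := by positivity
  simp [armRef, field]

lemma armRef_eq_armRef_succ {t1 t : ℕ} (h : t1 < t) (r : ℝ) (p : ℕ → ℝ) :
    armRef t1 r p t = armRef (t1 + 1) ((t1 * r + p t1) / (t1 + 1)) p t := by
  have : (t1 : ℝ) + 1 ≠ 0 := by positivity
  rw [armRef, armRef, Finset.sum_eq_sum_Ico_succ_bot h]
  push_cast
  rw [mul_div_cancel₀ _ this, add_assoc]

lemma sum_Ico_eq_armListSum (f : ℝ → ℝ → ℝ) (p : ℕ → ℝ) (n : ℕ) {t1 : ℕ} (ht1 : 0 < t1)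
    (r : ℝ) :
    ∑ t ∈ Ico t1 (t1 + n), f (p t) (armRef t1 r p t)
      = armListSum f t1 r ((List.range' t1 n).map p) := by
  induction n generalizing t1 r with
  | zero => simp [armListSum]
  | succ n ih =>
    rw [Finset.sum_eq_sum_Ico_succ_bot (by omega), armRef_self ht1, List.range'_succ,
      List.map_cons, armListSum, show t1 + (n + 1) = t1 + 1 + n by omega]
    congr 1
    rw [← Nat.cast_add_one, ← ih (Nat.succ_pos t1)]
    refine Finset.sum_congr rfl fun t ht => ?_
    rw [armRef_eq_armRef_succ (by simp at ht; omega)]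
    push_cast
    rfl

lemma mem_range'_iff_mem_Icc {t1 T t : ℕ} : t ∈ List.range' t1 (T + 1 - t1) ↔ t ∈ Icc t1 T := by
  rw [List.mem_range'_1, Finset.mem_Icc]
  omega

lemma armV_eq_armListSum (H : ℝ → ℝ) (α β : ℝ) {t1 : ℕ} (ht1 : 0 < t1) (T : ℕ) (r : ℝ)
    (p : ℕ → ℝ) :
    armV H α β t1 T r p
      = armListSum (armRev H α β) t1 r ((List.range' t1 (T + 1 - t1)).map p) := by
  have hwindow : Icc t1 T = Ico t1 (t1 + (T + 1 - t1)) := by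
    ext t
    simp only [Finset.mem_Icc, Finset.mem_Ico]
    omega
  rw [armV, hwindow, sum_Ico_eq_armListSum _ _ _ ht1]

lemma map_range'_getD {α : Type*} (s : ℕ) (l : List α) (d : α) :
    (List.range' s l.length).map (fun t => l.getD (t - s) d) = l := by
  refine List.ext_getElem (by simp) fun i h _ => ?_
  simp only [List.getElem_map, List.getElem_range', List.length_map, List.length_range'] at h ⊢
  rw [show s + 1 * i - s = i by omega, List.getD_eq_getElem _ _ h]

/-- The witness is the nonincreasing rearrangement of `p` on `[t1, T]`. -/
lemma exists_armV_le_armV {pbar : ℝ} (H : ℝ → ℝ) {α β : ℝ} (hα : 0 ≤ α) (hβ : 0 ≤ β) (β' : ℝ)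
    {t1 : ℕ} (ht1 : 0 < t1) (T : ℕ) {p : ℕ → ℝ}
    (hp : ∀ t ∈ Icc t1 T, p t ∈ Set.Icc 0 pbar) :
    ∃ q : ℕ → ℝ, (∀ t ∈ Icc t1 T, q t ∈ Set.Icc 0 pbar) ∧
      armV H α β t1 T pbar p ≤ armV H α β' t1 T pbar q := by
  set l := (List.range' t1 (T + 1 - t1)).map p
  set l' := l.insertionSort (· ≥ ·)
  have hperm : l'.Perm l := l.perm_insertionSort _
  have hl : ∀ x ∈ l, x ∈ Set.Icc 0 pbar := by
    simp only [l, List.mem_map, mem_range'_iff_mem_Icc]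
    rintro _ ⟨t, ht, rfl⟩
    exact hp t ht
  have hl' : ∀ x ∈ l', x ∈ Set.Icc 0 pbar := fun x hx => hl x (hperm.mem_iff.mp hx)
  set q : ℕ → ℝ := fun t => l'.getD (t - t1) 0
  have hq : (List.range' t1 (T + 1 - t1)).map q = l' := by
    have hlen : l'.length = T + 1 - t1 := by simp [l', l]
    simpa only [hlen] using map_range'_getD t1 l' 0
  refine ⟨q, fun t ht => hl' _ ?_, ?_⟩
  · rw [← hq]
    exact List.mem_map_of_mem (mem_range'_iff_mem_Icc.mpr ht)
  have ht1' : (0 : ℝ) ≤ t1 := t1.cast_nonneg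
  have hgain := armListSum_gainTerm_le_insertionSort (r := pbar) ht1' fun x hx => (hl x hx).1
  have hloss := armListSum_lossTerm_nonneg (t := t1) (r := pbar) fun x hx => (hl x hx).1
  have hloss' : armListSum lossTerm t1 pbar l' = 0 :=
    armListSum_lossTerm_eq_zero ht1' (List.pairwise_insertionSort _ l) fun x hx => (hl' x hx).2
  rw [armV_eq_armListSum H α β ht1, armV_eq_armListSum H α β' ht1, hq, armListSum_armRev,
    armListSum_armRev, (hperm.map _).sum_eq, hloss']
  linarith [mul_le_mul_of_nonneg_left hgain hα, mul_nonneg hβ hloss]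

theorem vstar_at_cap_independent_of_loss_general
    (pbar : ℝ) (H : ℝ → ℝ)
    (ηp ηm : ℝ) (hηp : 0 ≤ ηp) (hηm : 0 ≤ ηm)
    (t1 T : ℕ) (ht1 : 1 ≤ t1) :
    armVStar H ηp ηm t1 T pbar pbar = armVStar H ηp ηp t1 T pbar pbar := by
  apply csSup_eq_csSup_of_forall_exists_le
  · rintro _ ⟨p, hp, rfl⟩
    obtain ⟨q, hq, hle⟩ := exists_armV_le_armV H hηp hηm ηp ht1 T hp
    exact ⟨_, ⟨q, hq, rfl⟩, hle⟩
  · rintro _ ⟨p, hp, rfl⟩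
    obtain ⟨q, hq, hle⟩ := exists_armV_le_armV H hηp hηp ηm ht1 T hp
    exact ⟨_, ⟨q, hq, rfl⟩, hle⟩

/-- When the starting reference price equals the price cap `p̄`, the optimal ARM revenue
is unchanged if the loss parameter `η⁻` is replaced by the gain parameter `η⁺`. -/
theorem vstar_at_cap_independent_of_loss
    (pbar : ℝ) (hpbar : 0 < pbar) (H : ℝ → ℝ)
    (hH : ∃ C : ℝ, ∀ x ∈ Set.Icc (0 : ℝ) pbar, |H x| ≤ C)
    (ηp ηm : ℝ) (hηp : 0 ≤ ηp) (hηm : 0 ≤ ηm)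
    (t1 T : ℕ) (ht1 : 1 ≤ t1) (hT : t1 ≤ T) :
    armVStar H ηp ηm t1 T pbar pbar = armVStar H ηp ηp t1 T pbar pbar :=
  vstar_at_cap_independent_of_loss_general pbar H ηp ηm hηp hηm t1 T ht1
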